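/- A deterministic automaton is always simulated by the parallel composition of its natural projections: for A_S = (Q, q₀, E = ⋃_{i=1}^n E_i, δ) deterministic, A_S ≺ ∥_{i=1}^n P_i(A_S). -/
import Mathlib


/-- A (possibly nondeterministic) automaton over the label alphabet `Λ`,
with state type `Q`, initial state `init`, event set `ev ⊆ Λ`, and
transition relation `tr`. -/
structure Auto (Λ : Type) : Type 1 where
  Q : Type
  init : Q
  ev : Set Λ
  tr : Q → Λ → Q → Prop

/-- `R` is a simulation relation from `A` to `B`. -/
def SimRel {Λ : Type} (A B : Auto Λ) (R : A.Q → B.Q → Prop) : Prop :=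
  R A.init B.init ∧
  ∀ q₁ q₂, R q₁ q₂ → ∀ e q₁', A.tr q₁ e q₁' → ∃ q₂', B.tr q₂ e q₂' ∧ R q₁' q₂'

/-- `A ≺ B` : `B` simulates `A`. -/
def Sim {Λ : Type} (A B : Auto Λ) : Prop := ∃ R, SimRel A B R

/-- `A ≅ B` : there are simulation relations in both directions that are
inverses of each other. -/
def Bisim {Λ : Type} (A B : Auto Λ) : Prop :=
  ∃ R, SimRel A B R ∧ SimRel B A (fun b a => R a b)

/-- Parallel composition: synchronization on shared events, interleaving on
private events. -/
def par {Λ : Type} (A B : Auto Λ) : Auto Λ where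
  Q := A.Q × B.Q
  init := (A.init, B.init)
  ev := A.ev ∪ B.ev
  tr := fun p e p' =>
    (e ∈ A.ev ∧ e ∈ B.ev ∧ A.tr p.1 e p'.1 ∧ B.tr p.2 e p'.2) ∨
    (e ∈ A.ev ∧ e ∉ B.ev ∧ A.tr p.1 e p'.1 ∧ p'.2 = p.2) ∨
    (e ∈ B.ev ∧ e ∉ A.ev ∧ B.tr p.2 e p'.2 ∧ p'.1 = p.1)

/-- Runs of an automaton on strings of events. -/
inductive Run {Λ : Type} (A : Auto Λ) : A.Q → List Λ → A.Q → Prop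
  | nil (q : A.Q) : Run A q [] q
  | cons {q q' q'' : A.Q} {e : Λ} {s : List Λ} :
      A.tr q e q' → Run A q' s q'' → Run A q (e :: s) q''

/-- The language generated by an automaton. -/
def Lang {Λ : Type} (A : Auto Λ) : Set (List Λ) := {s | ∃ q, Run A A.init s q}

open Classical in
/-- Natural projection of strings onto the event set `E'`. -/
noncomputable def projf {Λ : Type} (E' : Set Λ) : List Λ → List Λ
  | [] => []
  | e :: s => if e ∈ E' then e :: projf E' s else projf E' s

/-- The natural projection automaton `P_{E'}(A)`: states are equivalence
classes of states of `A` under the smallest equivalence relation merging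
states connected by a transition labeled outside `E'`, with the induced
transitions on events of `E'`. -/
def projAuto {Λ : Type} (A : Auto Λ) (E' : Set Λ) : Auto Λ where
  Q := Quot (fun q q' : A.Q => ∃ e ∉ E', A.tr q e q')
  init := Quot.mk _ A.init
  ev := E'
  tr := fun x e y => e ∈ E' ∧ ∃ q q', Quot.mk _ q = x ∧ Quot.mk _ q' = y ∧ A.tr q e q'

/-- An automaton is deterministic when its transition relation is a partial
function (it has a unique initial state by construction). -/
def Det {Λ : Type} (A : Auto Λ) : Prop :=
  ∀ q e q₁ q₂, A.tr q e q₁ → A.tr q e q₂ → q₁ = q₂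

/-- `n+1`-fold parallel composition `∥_{i} F i`. -/
def parFam {Λ : Type} : {n : ℕ} → (Fin (n + 1) → Auto Λ) → Auto Λ
  | 0, F => F 0
  | Nat.succ n, F => par (F 0) (parFam (n := n) (fun i => F i.succ))

lemma parFam_aux {Λ : Type} (A : Auto Λ) :
    ∀ {n : ℕ} (F : Fin (n + 1) → Auto Λ) (R : ∀ i, A.Q → (F i).Q → Prop),
      (∀ i, R i A.init (F i).init) →
      (∀ i q x e q', R i q x → A.tr q e q' →
        (e ∈ (F i).ev → ∃ x', (F i).tr x e x' ∧ R i q' x') ∧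
        (e ∉ (F i).ev → R i q' x)) →
      ∃ S : A.Q → (parFam F).Q → Prop,
        S A.init (parFam F).init ∧
        ∀ q x e q', S q x → A.tr q e q' →
          (e ∈ (parFam F).ev → ∃ x', (parFam F).tr x e x' ∧ S q' x') ∧
          (e ∉ (parFam F).ev → S q' x) := by
  intro n
  induction n with
  | zero =>
    intro F R hinit hstep
    exact ⟨R 0, hinit 0, fun q x e q' h htr => hstep 0 q x e q' h htr⟩
  | succ n IH =>
    intro F R hinit hstep
    obtain ⟨S', hinit', hstep'⟩ := IH (fun i => F i.succ) (fun i => R i.succ)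
      (fun i => hinit i.succ) (fun i => hstep i.succ)
    refine ⟨fun q p => R 0 q p.1 ∧ S' q p.2, ⟨hinit 0, hinit'⟩, ?_⟩
    rintro q ⟨a, b⟩ e q' ⟨h0, hS⟩ htr
    obtain ⟨hy, hn⟩ := hstep 0 q a e q' h0 htr
    obtain ⟨hy', hn'⟩ := hstep' q b e q' hS htr
    constructor
    · intro hmem
      by_cases h1 : e ∈ (F 0).ev
      · by_cases h2 : e ∈ (parFam (fun i => F i.succ)).ev
        · obtain ⟨a', ta, ra⟩ := hy h1
          obtain ⟨b', tb, rb⟩ := hy' h2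
          exact ⟨(a', b'), Or.inl ⟨h1, h2, ta, tb⟩, ra, rb⟩
        · obtain ⟨a', ta, ra⟩ := hy h1
          exact ⟨(a', b), Or.inr (Or.inl ⟨h1, h2, ta, rfl⟩), ra, hn' h2⟩
      · by_cases h2 : e ∈ (parFam (fun i => F i.succ)).ev
        · obtain ⟨b', tb, rb⟩ := hy' h2
          exact ⟨(a, b'), Or.inr (Or.inr ⟨h2, h1, tb, rfl⟩), hn h1, rb⟩
        · exact absurd hmem (by
            intro h
            rcases h with h | h
            · exact h1 h
            · exact h2 h)
    · intro hmem
      exact ⟨hn (fun h => hmem (Or.inl h)), hn' (fun h => hmem (Or.inr h))⟩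

lemma mem_ev_parFam {Λ : Type} : ∀ {n : ℕ} (F : Fin (n + 1) → Auto Λ) (i : Fin (n + 1))
    {e : Λ}, e ∈ (F i).ev → e ∈ (parFam F).ev := by
  intro n
  induction n with
  | zero =>
    intro F i e he
    have := Fin.fin_one_eq_zero i
    subst this
    exact he
  | succ n IH =>
    intro F i e he
    show e ∈ (F 0).ev ∪ (parFam fun j : Fin (n+1) => F j.succ).ev
    cases i using Fin.cases with
    | zero => exact Or.inl he
    | succ j => exact Or.inr (IH (fun j => F j.succ) j he)

/-- a deterministic automaton over `E = ⋃ᵢ Eᵢ` is always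
simulated by the parallel composition of its natural projections. -/
theorem sim_parFam_of_det {Λ : Type} {n : ℕ} (A : Auto Λ) (Ei : Fin (n + 1) → Set Λ)
    (hdet : Det A) (hev : A.ev = Set.univ) (hcover : (⋃ i, Ei i) = (Set.univ : Set Λ)) :
    Sim A (parFam (fun i => projAuto A (Ei i))) := by
  obtain ⟨S, hSinit, hSstep⟩ := parFam_aux A (fun i => projAuto A (Ei i))
    (fun i q x => Quot.mk _ q = x)
    (fun i => rfl)
    (by
      intro i q x e q' hR htr
      constructor
      · intro he
        exact ⟨Quot.mk _ q', ⟨he, q, q', hR, rfl, htr⟩, rfl⟩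
      · intro he
        exact (Quot.sound ⟨e, he, htr⟩).symm.trans hR)
  refine ⟨S, hSinit, ?_⟩
  intro q x hR e q' htr
  refine (hSstep q x e q' hR htr).1 ?_
  have : e ∈ ⋃ i, Ei i := hcover ▸ Set.mem_univ e
  obtain ⟨i, hi⟩ := Set.mem_iUnion.mp this
  exact mem_ev_parFam (fun i => projAuto A (Ei i)) i hi
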